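/- arXiv:1510.03378 — 3 statements merged into one kernel-verified Lean document; each statement's English description precedes it below -/
import Mathlib

section
/- Let (V, P) be a C¹ homogeneous solution of degree −α of the stationary Euler equations on ℝ³ ∖ {0}. If |v(σ)|² + 2α p(σ) = 0 for every σ on the unit sphere S², where v(σ) = V(σ) − (V(σ)·σ)σ and p(σ) = P(σ), then the solution is tangential: V(x) · x = 0 for all x ≠ 0. -/
noncomputable section

open Real MeasureTheory Metric

/-- Three-dimensional Euclidean space. -/
abbrev E3 : Type := EuclideanSpace ℝ (Fin 3)

/-- The `i`-th standard basis vector of `ℝ³`. -/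
def e3 (i : Fin 3) : E3 := EuclideanSpace.single i 1

/-- Make a vector in `ℝ³` out of three coordinates. -/
def vec3 (a b c : ℝ) : E3 := (WithLp.equiv 2 (Fin 3 → ℝ)).symm ![a, b, c]

/-- Divergence of a vector field on `ℝ³`. -/
def div3 (V : E3 → E3) (x : E3) : ℝ := ∑ i, fderiv ℝ V x (e3 i) i

/-- Curl (vorticity) of a vector field on `ℝ³`. -/
def curl3 (V : E3 → E3) (x : E3) : E3 :=
  vec3 (fderiv ℝ V x (e3 1) 2 - fderiv ℝ V x (e3 2) 1)
       (fderiv ℝ V x (e3 2) 0 - fderiv ℝ V x (e3 0) 2)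
       (fderiv ℝ V x (e3 0) 1 - fderiv ℝ V x (e3 1) 0)

/-- Cross product on `ℝ³`. -/
def cross3 (u v : E3) : E3 :=
  vec3 (u 1 * v 2 - u 2 * v 1) (u 2 * v 0 - u 0 * v 2) (u 0 * v 1 - u 1 * v 0)

/-- `(V, P)` is a `C¹` homogeneous solution of degree `-α` of the stationary
Euler equations on `ℝ³ \ {0}`: `V`, `P` are `C¹` away from the origin,
positively homogeneous of degrees `-α` and `-2α` respectively, and
`(V·∇)V + ∇P = 0`, `div V = 0` hold pointwise away from the origin. -/
structure IsHomogEuler (α : ℝ) (V : E3 → E3) (P : E3 → ℝ) : Prop where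
  contV : ContDiffOn ℝ 1 V {(0 : E3)}ᶜ
  contP : ContDiffOn ℝ 1 P {(0 : E3)}ᶜ
  homV : ∀ l : ℝ, 0 < l → ∀ x : E3, x ≠ 0 → V (l • x) = l ^ (-α) • V x
  homP : ∀ l : ℝ, 0 < l → ∀ x : E3, x ≠ 0 → P (l • x) = l ^ (-(2 * α)) * P x
  euler : ∀ x : E3, x ≠ 0 → fderiv ℝ V x (V x) + gradient P x = 0
  divFree : ∀ x : E3, x ≠ 0 → div3 V x = 0

/-!
The radial flux `g(x) = V(x)·x` is homogeneous of degree `1 - α`, so it suffices to show that `g`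
vanishes on the unit sphere. Along the flow, the Euler equation and Euler's identity for `P` give
`V·∇g = |V|² + 2αP`, and the hypothesis says that this equals `g²` on the sphere.

If `α ≠ 0`, let `σ₀` maximise the degree-zero function `|x|^(α-1) g` on the sphere. It is a
critical point in `ℝ³ ∖ {0}`, and differentiating along `V(σ₀)` gives `α g(σ₀)² = 0`, so `g ≤ 0` on
the sphere. Since `(-V, P)` is again a solution satisfying the hypothesis, also `g ≥ 0`.

If `α = 0`, the hypothesis says that `V` is radial, `V(x) = φ(x) x` with `φ` homogeneous of degree
`-α - 1`, so `0 = div V = 3φ + x·∇φ = (2 - α) φ`.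
-/

open scoped RealInnerProductSpace
open Filter Topology

theorem norm_inv_norm_smul {E : Type*} [NormedAddCommGroup E] [NormedSpace ℝ E] {x : E}
    (hx : x ≠ 0) : ‖‖x‖⁻¹ • x‖ = 1 := by
  simpa using norm_smul_inv_norm (𝕜 := ℝ) hx

section InnerProductSpace

variable {E : Type*} [NormedAddCommGroup E] [InnerProductSpace ℝ E]

theorem norm_sub_inner_smul_sq {σ : E} (hσ : ‖σ‖ = 1) (v : E) :
    ‖v - ⟪v, σ⟫ • σ‖ ^ 2 = ‖v‖ ^ 2 - ⟪v, σ⟫ ^ 2 := by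
  rw [norm_sub_sq_real, real_inner_smul_right, norm_smul, hσ, Real.norm_eq_abs, mul_one, sq_abs]
  ring

theorem hasFDerivAt_norm_sq_rpow_mul {g : E → ℝ} {σ : E} (hσ : ‖σ‖ = 1)
    (hg : DifferentiableAt ℝ g σ) (γ : ℝ) :
    HasFDerivAt (fun y => (‖y‖ ^ 2) ^ γ * g y)
      ((2 * γ * g σ) • innerSL ℝ σ + fderiv ℝ g σ) σ := by
  have hn : HasFDerivAt (fun y : E => (‖y‖ ^ 2) ^ γ) (γ • (2 : ℕ) • innerSL ℝ σ) σ := by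
    simpa [hσ] using (hasFDerivAt_id σ).norm_sq.rpow_const (p := γ) (by simp [hσ])
  refine (hn.mul hg.hasFDerivAt).congr_fderiv ?_
  ext w
  simp [hσ]
  ring

end InnerProductSpace

def IsPosHomogeneous {E F : Type*} [NormedAddCommGroup E] [NormedSpace ℝ E]
    [NormedAddCommGroup F] [NormedSpace ℝ F] (β : ℝ) (u : E → F) : Prop :=
  ∀ l : ℝ, 0 < l → ∀ x : E, x ≠ 0 → u (l • x) = l ^ β • u x

namespace IsPosHomogeneous

section Normed

variable {E F : Type*} [NormedAddCommGroup E] [NormedSpace ℝ E]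
  [NormedAddCommGroup F] [NormedSpace ℝ F] {β : ℝ} {u : E → F}

theorem fderiv_apply_self (hu : IsPosHomogeneous β u) {x : E} (hx : x ≠ 0)
    (hd : DifferentiableAt ℝ u x) : fderiv ℝ u x x = β • u x := by
  have hcomp : HasDerivAt (fun l : ℝ => u (l • x)) (fderiv ℝ u x x) 1 := by
    have hline : HasDerivAt (fun l : ℝ => l • x) x 1 := by
      simpa using (hasDerivAt_id (1 : ℝ)).smul_const x
    have hd1 : HasFDerivAt u (fderiv ℝ u x) ((1 : ℝ) • x) := by
      rw [one_smul]; exact hd.hasFDerivAt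
    exact hd1.comp_hasDerivAt 1 hline
  have hpow : HasDerivAt (fun l : ℝ => l ^ β • u x) (β • u x) 1 := by
    simpa using (Real.hasDerivAt_rpow_const (p := β) (Or.inl one_ne_zero)).smul_const (u x)
  have heq : (fun l : ℝ => l ^ β • u x) =ᶠ[𝓝 1] fun l => u (l • x) := by
    filter_upwards [Ioi_mem_nhds one_pos] with l hl
    exact (hu l hl x hx).symm
  exact (hcomp.congr_of_eventuallyEq heq).unique hpow

theorem apply_eq_norm_rpow_smul (hu : IsPosHomogeneous β u) {x : E} (hx : x ≠ 0) :
    u x = ‖x‖ ^ β • u (‖x‖⁻¹ • x) := by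
  have hnx : 0 < ‖x‖ := norm_pos_iff.2 hx
  conv_lhs => rw [← smul_inv_smul₀ hnx.ne' x]
  exact hu _ hnx _ (smul_ne_zero (inv_ne_zero hnx.ne') hx)

theorem eq_zero_of_eq_zero_on_sphere (hu : IsPosHomogeneous β u)
    (h0 : ∀ σ : E, ‖σ‖ = 1 → u σ = 0) {x : E} (hx : x ≠ 0) : u x = 0 := by
  rw [hu.apply_eq_norm_rpow_smul hx, h0 _ (norm_inv_norm_smul hx), smul_zero]

theorem isLocalMax_of_isMaxOn_sphere {u : E → ℝ} (hu : IsPosHomogeneous 0 u) {σ : E}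
    (hσ : ‖σ‖ = 1) (hmax : IsMaxOn u (sphere 0 1) σ) : IsLocalMax u σ := by
  have hσ0 : σ ≠ 0 := by rintro rfl; simp at hσ
  filter_upwards [isOpen_compl_singleton.mem_nhds hσ0] with x hx
  rw [hu.apply_eq_norm_rpow_smul hx, Real.rpow_zero, one_smul]
  exact hmax (mem_sphere_zero_iff_norm.2 (norm_inv_norm_smul hx))

theorem mul {γ : ℝ} {u w : E → ℝ} (hu : IsPosHomogeneous β u) (hw : IsPosHomogeneous γ w) :
    IsPosHomogeneous (β + γ) (fun x => u x * w x) := by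
  intro l hl x hx
  simp only [smul_eq_mul, hu l hl x hx, hw l hl x hx, Real.rpow_add hl]
  ring

end Normed

section Inner

variable {E : Type*} [NormedAddCommGroup E] [InnerProductSpace ℝ E]

theorem norm_sq_rpow (γ : ℝ) : IsPosHomogeneous (2 * γ) (fun x : E => (‖x‖ ^ 2) ^ γ) := by
  intro l hl x _
  dsimp only
  rw [norm_smul, Real.norm_of_nonneg hl.le, mul_pow, Real.mul_rpow (by positivity) (by positivity),
    ← Real.rpow_natCast, ← Real.rpow_mul hl.le, smul_eq_mul]
  norm_num

theorem inner_self {β : ℝ} {V : E → E} (hV : IsPosHomogeneous β V) :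
    IsPosHomogeneous (β + 1) (fun x => ⟪V x, x⟫) := by
  intro l hl x hx
  dsimp only
  rw [hV l hl x hx, real_inner_smul_left, real_inner_smul_right, Real.rpow_add_one hl.ne',
    smul_eq_mul]
  ring

theorem eq_smul_self_of_radial {β : ℝ} {V : E → E} (hV : IsPosHomogeneous β V)
    (hrad : ∀ σ : E, ‖σ‖ = 1 → V σ = ⟪V σ, σ⟫ • σ) {y : E} (hy : y ≠ 0) :
    V y = ((‖y‖ ^ 2) ^ (-1 : ℝ) * ⟪V y, y⟫) • y := by
  obtain ⟨c, hc⟩ : ∃ c : ℝ, V y = c • y := ⟨_, by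
    rw [hV.apply_eq_norm_rpow_smul hy, hrad _ (norm_inv_norm_smul hy), smul_smul,
      smul_smul]⟩
  have hny : ‖y‖ ≠ 0 := norm_ne_zero_iff.2 hy
  rw [hc, real_inner_smul_left, real_inner_self_eq_norm_sq, Real.rpow_neg_one]
  field_simp

end Inner

end IsPosHomogeneous

theorem Filter.EventuallyEq.div3_eq {V W : E3 → E3} {x : E3} (h : V =ᶠ[𝓝 x] W) :
    div3 V x = div3 W x := by
  simp only [div3, h.fderiv_eq]

theorem div3_smul_self {φ : E3 → ℝ} {x : E3} (hφ : DifferentiableAt ℝ φ x) :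
    div3 (fun y => φ y • y) x = 3 * φ x + fderiv ℝ φ x x := by
  have hx : fderiv ℝ φ x x = ∑ i, x i * fderiv ℝ φ x (e3 i) := by
    have hsum : ∑ i, x i • e3 i = x := by
      simpa [e3] using (EuclideanSpace.basisFun (Fin 3) ℝ).sum_repr x
    simp only [← smul_eq_mul, ← map_smul, ← map_sum, hsum]
  have hd : HasFDerivAt (fun y => φ y • y)
      (φ x • ContinuousLinearMap.id ℝ E3 + (fderiv ℝ φ x).smulRight x) x :=
    hφ.hasFDerivAt.smul (hasFDerivAt_id x)
  rw [div3, hd.fderiv, hx]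
  simp [e3, Fin.sum_univ_three]
  ring

namespace IsHomogEuler

variable {α : ℝ} {V : E3 → E3} {P : E3 → ℝ}

theorem isPosHomogeneous_V (h : IsHomogEuler α V P) : IsPosHomogeneous (-α) V := h.homV

theorem isPosHomogeneous_P (h : IsHomogEuler α V P) : IsPosHomogeneous (-(2 * α)) P := h.homP

theorem differentiableAt_V (h : IsHomogEuler α V P) {x : E3} (hx : x ≠ 0) :
    DifferentiableAt ℝ V x :=
  (h.contV.differentiableOn one_ne_zero).differentiableAt (isOpen_compl_singleton.mem_nhds hx)

theorem differentiableAt_P (h : IsHomogEuler α V P) {x : E3} (hx : x ≠ 0) :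
    DifferentiableAt ℝ P x :=
  (h.contP.differentiableOn one_ne_zero).differentiableAt (isOpen_compl_singleton.mem_nhds hx)

theorem differentiableAt_inner_self (h : IsHomogEuler α V P) {x : E3} (hx : x ≠ 0) :
    DifferentiableAt ℝ (fun y => ⟪V y, y⟫) x :=
  (h.differentiableAt_V hx).inner ℝ differentiableAt_id

theorem fderiv_inner_self_apply_self (h : IsHomogEuler α V P) {x : E3} (hx : x ≠ 0) :
    fderiv ℝ (fun y => ⟪V y, y⟫) x (V x) = ‖V x‖ ^ 2 + 2 * α * P x := by
  have hgrad : ⟪gradient P x, x⟫ = -(2 * α) * P x := by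
    rw [gradient, InnerProductSpace.toDual_symm_apply,
      h.isPosHomogeneous_P.fderiv_apply_self hx (h.differentiableAt_P hx), smul_eq_mul]
  rw [fderiv_inner_apply ℝ (h.differentiableAt_V hx) differentiableAt_fun_id, fderiv_fun_id,
    ContinuousLinearMap.id_apply, eq_neg_of_add_eq_zero_left (h.euler x hx), inner_neg_left, hgrad,
    real_inner_self_eq_norm_sq]
  ring

theorem neg (h : IsHomogEuler α V P) : IsHomogEuler α (-V) P where
  contV := h.contV.neg
  contP := h.contP
  homV l hl x hx := by simp [h.homV l hl x hx]
  homP := h.homP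
  euler x hx := by simpa [fderiv_neg] using h.euler x hx
  divFree x hx := by simpa [div3, fderiv_neg] using h.divFree x hx

theorem inner_le_zero_of_norm_sq_add_eq (h : IsHomogEuler α V P) (hα : α ≠ 0)
    (hbern : ∀ σ : E3, ‖σ‖ = 1 → ‖V σ‖ ^ 2 + 2 * α * P σ = ⟪V σ, σ⟫ ^ 2)
    {σ : E3} (hσ : ‖σ‖ = 1) : ⟪V σ, σ⟫ ≤ 0 := by
  set G : E3 → ℝ := fun y => (‖y‖ ^ 2) ^ ((α - 1) / 2) * ⟪V y, y⟫ with hG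
  have hG_sphere : ∀ σ : E3, ‖σ‖ = 1 → G σ = ⟪V σ, σ⟫ := by
    intro σ hσ
    simp [hG, hσ]
  have hG_hom : IsPosHomogeneous 0 G := by
    have := (IsPosHomogeneous.norm_sq_rpow (E := E3) ((α - 1) / 2)).mul
      h.isPosHomogeneous_V.inner_self
    rwa [show 2 * ((α - 1) / 2) + (-α + 1) = 0 by ring] at this
  have hG_deriv : ∀ σ : E3, ‖σ‖ = 1 → HasFDerivAt G
      ((2 * ((α - 1) / 2) * ⟪V σ, σ⟫) • innerSL ℝ σ + fderiv ℝ (fun y => ⟪V y, y⟫) σ) σ :=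
    fun σ hσ => hasFDerivAt_norm_sq_rpow_mul hσ
      (h.differentiableAt_inner_self (ne_zero_of_norm_ne_zero (by simp [hσ]))) _
  obtain ⟨σ₀, hσ₀, hmax⟩ := (isCompact_sphere (0 : E3) 1).exists_isMaxOn
    (NormedSpace.sphere_nonempty.2 zero_le_one)
    fun y hy => (hG_deriv y (mem_sphere_zero_iff_norm.1 hy)).continuousAt.continuousWithinAt
  rw [mem_sphere_zero_iff_norm] at hσ₀
  have hσ₀0 : σ₀ ≠ 0 := ne_zero_of_norm_ne_zero (by simp [hσ₀])
  have hcrit := congrArg (· (V σ₀)) (hG_hom.isLocalMax_of_isMaxOn_sphere hσ₀ hmax).fderiv_eq_zero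
  simp only [(hG_deriv σ₀ hσ₀).fderiv, add_apply, smul_apply, coe_innerSL_apply,
    real_inner_comm (V σ₀) σ₀, smul_eq_mul, h.fderiv_inner_self_apply_self hσ₀0, hbern σ₀ hσ₀,
    zero_apply] at hcrit
  have hmax_zero : ⟪V σ₀, σ₀⟫ = 0 := by
    have : α * ⟪V σ₀, σ₀⟫ ^ 2 = 0 := by linear_combination hcrit
    simpa [hα] using this
  calc ⟪V σ, σ⟫ = G σ := (hG_sphere σ hσ).symm
    _ ≤ G σ₀ := hmax (mem_sphere_zero_iff_norm.2 hσ)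
    _ = 0 := by rw [hG_sphere σ₀ hσ₀, hmax_zero]

theorem inner_eq_zero_of_norm_sq_add_eq (h : IsHomogEuler α V P) (hα : α ≠ 0)
    (hbern : ∀ σ : E3, ‖σ‖ = 1 → ‖V σ‖ ^ 2 + 2 * α * P σ = ⟪V σ, σ⟫ ^ 2)
    {σ : E3} (hσ : ‖σ‖ = 1) : ⟪V σ, σ⟫ = 0 := by
  have hneg := h.neg.inner_le_zero_of_norm_sq_add_eq hα
    (fun σ hσ => by simpa using hbern σ hσ) hσ
  simp only [Pi.neg_apply, inner_neg_left, neg_nonpos] at hneg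
  exact le_antisymm (h.inner_le_zero_of_norm_sq_add_eq hα hbern hσ) hneg

theorem inner_eq_zero_of_radial (h : IsHomogEuler α V P) (hα : α ≠ 2)
    (hrad : ∀ σ : E3, ‖σ‖ = 1 → V σ = ⟪V σ, σ⟫ • σ) {σ : E3} (hσ : ‖σ‖ = 1) :
    ⟪V σ, σ⟫ = 0 := by
  set φ : E3 → ℝ := fun y => (‖y‖ ^ 2) ^ (-1 : ℝ) * ⟪V y, y⟫ with hφ
  have hσ0 : σ ≠ 0 := ne_zero_of_norm_ne_zero (by simp [hσ])
  have hφσ : φ σ = ⟪V σ, σ⟫ := by simp [hφ, hσ]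
  have hφ_hom : IsPosHomogeneous (-α - 1) φ := by
    have := (IsPosHomogeneous.norm_sq_rpow (E := E3) (-1)).mul h.isPosHomogeneous_V.inner_self
    rwa [show 2 * (-1) + (-α + 1) = -α - 1 by ring] at this
  have hφ_diff : DifferentiableAt ℝ φ σ :=
    (hasFDerivAt_norm_sq_rpow_mul hσ (h.differentiableAt_inner_self hσ0) _).differentiableAt
  have hV_eq : V =ᶠ[𝓝 σ] fun y => φ y • y := by
    filter_upwards [isOpen_compl_singleton.mem_nhds hσ0] with y hy
    exact h.isPosHomogeneous_V.eq_smul_self_of_radial hrad hy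
  have hdiv := h.divFree σ hσ0
  rw [hV_eq.div3_eq, div3_smul_self hφ_diff, hφ_hom.fderiv_apply_self hσ0 hφ_diff,
    smul_eq_mul] at hdiv
  have : (2 - α) * φ σ = 0 := by linear_combination hdiv
  rw [← hφσ]
  exact (mul_eq_zero.1 this).resolve_left (sub_ne_zero.2 hα.symm)

end IsHomogEuler

/-- if `|v|² + 2αp = 0` on the unit sphere then the flow is
tangential (rotational). -/
theorem stmt6 (α : ℝ) (V : E3 → E3) (P : E3 → ℝ) (h : IsHomogEuler α V P)
    (hyp : ∀ σ : E3, ‖σ‖ = 1 →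
      ‖V σ - (inner ℝ (V σ) σ : ℝ) • σ‖ ^ 2 + 2 * α * P σ = 0) :
    ∀ x : E3, x ≠ 0 → (inner ℝ (V x) x : ℝ) = 0 := by
  have hsphere : ∀ σ : E3, ‖σ‖ = 1 → ⟪V σ, σ⟫ = 0 := by
    rcases eq_or_ne α 0 with rfl | hα
    · refine fun σ => h.inner_eq_zero_of_radial (by norm_num) fun σ hσ => ?_
      simpa [sub_eq_zero] using hyp σ hσ
    · refine fun σ => h.inner_eq_zero_of_norm_sq_add_eq hα fun σ hσ => ?_
      linarith [hyp σ hσ, norm_sub_inner_smul_sq hσ (V σ)]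
  exact fun x => h.isPosHomogeneous_V.inner_self.eq_zero_of_eq_zero_on_sphere hsphere
end
end

section
/- Let α ∈ ℝ with α ≠ 2 and let I ⊆ (0, π) be an open interval. Suppose f, a, b : I → ℝ are differentiable, a(φ) b(φ) ≠ 0 for all φ ∈ I, and for all φ ∈ I: (2−α) f(φ) + a′(φ) + a(φ) cot φ = 0 and (1−α) f(φ) b(φ) + a(φ) b′(φ) + a(φ) b(φ) cot φ = 0. Then the function φ ↦ |b(φ)|^{2−α} · |a(φ)|^{α−1} · sin φ is constant on I. -/
/-!
Where `a b ≠ 0` and `sin φ ≠ 0`, the logarithmic derivative of `|b|^(2-α) |a|^(α-1) sin φ` is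
`(2-α) b'/b + (α-1) a'/a + cot φ`, and this is `(2-α)/(a b)` times the second equation minus
`(1-α)/a` times the first, hence zero. A function with vanishing derivative on an interval
is constant.
-/

noncomputable section

open Real MeasureTheory Metric

theorem HasDerivAt.abs_rpow_const {g : ℝ → ℝ} {g' x : ℝ} (p : ℝ) (hg : HasDerivAt g g' x)
    (hx : g x ≠ 0) : HasDerivAt (fun y => |g y| ^ p) (p * (g' / g x) * |g x| ^ p) x := by
  have habs : |g x| ≠ 0 := abs_ne_zero.mpr hx
  rcases hx.lt_or_gt with hneg | hpos
  · have hd : HasDerivAt (fun y => |g y|) (-1 * g') x := (hasDerivAt_abs_neg hneg).comp x hg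
    convert hd.rpow_const (p := p) (Or.inl habs) using 1
    rw [rpow_sub_one habs, abs_of_neg hneg]
    field_simp
  · have hd : HasDerivAt (fun y => |g y|) (1 * g') x := (hasDerivAt_abs_pos hpos).comp x hg
    convert hd.rpow_const (p := p) (Or.inl habs) using 1
    rw [rpow_sub_one habs, abs_of_pos hpos]
    field_simp

def meridionalInvariant (α : ℝ) (a b : ℝ → ℝ) (φ : ℝ) : ℝ :=
  |b φ| ^ (2 - α) * |a φ| ^ (α - 1) * sin φ

theorem meridional_logDeriv_eq_zero {α f a b a' b' c : ℝ} (ha : a ≠ 0) (hb : b ≠ 0)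
    (h1 : (2 - α) * f + a' + a * c = 0) (h4 : (1 - α) * f * b + a * b' + a * b * c = 0) :
    (2 - α) * (b' / b) + (α - 1) * (a' / a) + c = 0 := by
  field_simp
  linear_combination (2 - α) * h4 - (1 - α) * b * h1

theorem hasDerivAt_meridionalInvariant {α : ℝ} {f a b a' b' : ℝ → ℝ} {φ : ℝ} (hsin : sin φ ≠ 0)
    (ha : HasDerivAt a (a' φ) φ) (hb : HasDerivAt b (b' φ) φ) (hab : a φ * b φ ≠ 0)
    (h1 : (2 - α) * f φ + a' φ + a φ * (cos φ / sin φ) = 0)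
    (h4 : (1 - α) * f φ * b φ + a φ * b' φ + a φ * b φ * (cos φ / sin φ) = 0) :
    HasDerivAt (meridionalInvariant α a b) 0 φ := by
  have ha0 : a φ ≠ 0 := left_ne_zero_of_mul hab
  have hb0 : b φ ≠ 0 := right_ne_zero_of_mul hab
  have hlog := meridional_logDeriv_eq_zero ha0 hb0 h1 h4
  have hcos : cos φ / sin φ * sin φ = cos φ := div_mul_cancel₀ _ hsin
  refine (((hb.abs_rpow_const (2 - α) hb0).mul (ha.abs_rpow_const (α - 1) ha0)).mul
    (hasDerivAt_sin φ)).congr_deriv ?_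
  rw [Pi.mul_apply]
  set B := |b φ| ^ (2 - α)
  set A := |a φ| ^ (α - 1)
  linear_combination (B * A * sin φ) * hlog - B * A * hcos

theorem stmt17_general (α : ℝ) (s t : ℝ)
    (hI : Set.Ioo s t ⊆ Set.Ioo 0 π)
    (f a b a' b' : ℝ → ℝ)
    (ha : ∀ φ ∈ Set.Ioo s t, HasDerivAt a (a' φ) φ)
    (hb : ∀ φ ∈ Set.Ioo s t, HasDerivAt b (b' φ) φ)
    (hab : ∀ φ ∈ Set.Ioo s t, a φ * b φ ≠ 0)
    (heq1 : ∀ φ ∈ Set.Ioo s t,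
      (2 - α) * f φ + a' φ + a φ * (Real.cos φ / Real.sin φ) = 0)
    (heq4 : ∀ φ ∈ Set.Ioo s t,
      (1 - α) * f φ * b φ + a φ * b' φ
        + a φ * b φ * (Real.cos φ / Real.sin φ) = 0) :
    ∀ φ₁ ∈ Set.Ioo s t, ∀ φ₂ ∈ Set.Ioo s t,
      |b φ₁| ^ (2 - α) * |a φ₁| ^ (α - 1) * Real.sin φ₁ =
      |b φ₂| ^ (2 - α) * |a φ₂| ^ (α - 1) * Real.sin φ₂ := by
  have hderiv : ∀ φ ∈ Set.Ioo s t, HasDerivAt (meridionalInvariant α a b) 0 φ := fun φ hφ =>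
    hasDerivAt_meridionalInvariant (sin_pos_of_pos_of_lt_pi (hI hφ).1 (hI hφ).2).ne'
      (ha φ hφ) (hb φ hφ) (hab φ hφ) (heq1 φ hφ) (heq4 φ hφ)
  intro φ₁ hφ₁ φ₂ hφ₂
  exact isOpen_Ioo.is_const_of_deriv_eq_zero isPreconnected_Ioo
    (fun φ hφ => (hderiv φ hφ).differentiableAt.differentiableWithinAt)
    (fun φ hφ => (hderiv φ hφ).deriv) hφ₁ hφ₂

/-- the first integral `|b|^{2-α} |a|^{α-1} sin φ` of the
axisymmetric meridional equations is constant. -/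
theorem stmt17 (α : ℝ) (hα : α ≠ 2) (s t : ℝ)
    (hI : Set.Ioo s t ⊆ Set.Ioo 0 π)
    (f a b a' b' : ℝ → ℝ)
    (hf : ∀ φ ∈ Set.Ioo s t, DifferentiableAt ℝ f φ)
    (ha : ∀ φ ∈ Set.Ioo s t, HasDerivAt a (a' φ) φ)
    (hb : ∀ φ ∈ Set.Ioo s t, HasDerivAt b (b' φ) φ)
    (hab : ∀ φ ∈ Set.Ioo s t, a φ * b φ ≠ 0)
    (heq1 : ∀ φ ∈ Set.Ioo s t,
      (2 - α) * f φ + a' φ + a φ * (Real.cos φ / Real.sin φ) = 0)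
    (heq4 : ∀ φ ∈ Set.Ioo s t,
      (1 - α) * f φ * b φ + a φ * b' φ
        + a φ * b φ * (Real.cos φ / Real.sin φ) = 0) :
    ∀ φ₁ ∈ Set.Ioo s t, ∀ φ₂ ∈ Set.Ioo s t,
      |b φ₁| ^ (2 - α) * |a φ₁| ^ (α - 1) * Real.sin φ₁ =
      |b φ₂| ^ (2 - α) * |a φ₂| ^ (α - 1) * Real.sin φ₂ :=
  stmt17_general α s t hI f a b a' b' ha hb hab heq1 heq4
end
end

section
/- Let α = 2/3 (the Onsager-critical scaling) and let (V, P) be a C¹ homogeneous solution of degree −2/3 of the stationary Euler equations on ℝ³ ∖ {0}. Then the anomalous energy flux through the unit sphere vanishes: ∫_{S²} ((1/2)|V(σ)|² + P(σ)) (V(σ)·σ) dσ = 0, where the integral is with respect to the surface measure on the unit sphere S². -/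
/-!
The total pressure `H = ½|V|² + P` is constant along streamlines (Bernoulli's law), so for every
`C¹` function `ψ` the field `ψ(H) V` is divergence free. For `ψₛ(t) = t|t|ˢ` with `s > 0` this
field is homogeneous of degree `-2 - 4s/3`. Testing its divergence against a radial cutoff and
passing to polar coordinates shows that the flux through the sphere of radius `r`, which scales
like `r^(-4s/3)`, is independent of `r`; hence the flux of `ψₛ(H) V` through the unit sphere
vanishes. Letting `s → 0` by dominated convergence gives the flux of `H V`.
-/

noncomputable section

open Real MeasureTheory Metric

open Filter Set Topology

lemma sum_apply_e3_mul_apply (L : E3 →L[ℝ] ℝ) (u : E3) : ∑ i, L (e3 i) * u i = L u := by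
  conv_rhs => rw [← (EuclideanSpace.basisFun (Fin 3) ℝ).sum_repr u]
  simp [e3, mul_comm]

lemma div3_smul {c : E3 → ℝ} {W : E3 → E3} {x : E3} (hc : DifferentiableAt ℝ c x)
    (hW : DifferentiableAt ℝ W x) :
    div3 (fun y => c y • W y) x = c x * div3 W x + fderiv ℝ c x (W x) := by
  simp only [div3, fderiv_fun_smul hc hW, add_apply, smul_apply,
    ContinuousLinearMap.smulRight_apply, PiLp.add_apply, PiLp.smul_apply, smul_eq_mul,
    Finset.sum_add_distrib, Finset.mul_sum, sum_apply_e3_mul_apply]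

theorem integral_fderiv_apply_eq_zero {E F : Type*} [NormedAddCommGroup E] [NormedSpace ℝ E]
    [FiniteDimensional ℝ E] [MeasurableSpace E] [BorelSpace E] [NormedAddCommGroup F]
    [NormedSpace ℝ F] (μ : Measure E) [μ.IsAddHaarMeasure] {G : E → F}
    (hG : ContDiff ℝ 1 G) (hsupp : HasCompactSupport G) (v : E) :
    ∫ x, fderiv ℝ G x v ∂μ = 0 := by
  simpa using integral_smul_fderiv_eq_neg_fderiv_smul_of_integrable (μ := μ)
    (f := fun _ => (1 : ℝ)) (g := G) (v := v) (by simp)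
    (by simpa using ((hG.continuous_fderiv one_ne_zero).clm_apply continuous_const)
      |>.integrable_of_hasCompactSupport (hsupp.fderiv_apply (𝕜 := ℝ) v))
    (by simpa using hG.continuous.integrable_of_hasCompactSupport hsupp)
    (fun x _ => differentiableAt_const _) (fun x _ => hG.differentiable one_ne_zero x)

theorem integral_div3_eq_zero {G : E3 → E3} (hG : ContDiff ℝ 1 G) (hsupp : HasCompactSupport G) :
    ∫ x, div3 G x = 0 := by
  have hint (i : Fin 3) : Integrable fun x => fderiv ℝ G x (e3 i) :=
    ((hG.continuous_fderiv one_ne_zero).clm_apply continuous_const)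
      |>.integrable_of_hasCompactSupport (hsupp.fderiv_apply (𝕜 := ℝ) _)
  have hint_apply (i : Fin 3) : Integrable fun x => fderiv ℝ G x (e3 i) i :=
    (EuclideanSpace.proj (𝕜 := ℝ) i).integrable_comp (hint i)
  unfold div3
  rw [integral_finsetSum _ fun i _ => hint_apply i]
  refine Finset.sum_eq_zero fun i _ => ?_
  simpa [integral_fderiv_apply_eq_zero volume hG hsupp] using
    (EuclideanSpace.proj (𝕜 := ℝ) i).integral_comp_comm (hint i)

section SignedRpow

def signedRpow (s t : ℝ) : ℝ := t * |t| ^ s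

variable {s : ℝ}

lemma hasDerivAt_signedRpow (hs : 0 ≤ s) (t : ℝ) :
    HasDerivAt (signedRpow s) ((1 + s) * |t| ^ s) t := by
  have hne {t : ℝ} (ht : t ≠ 0) : HasDerivAt (signedRpow s) ((1 + s) * |t| ^ s) t := by
    have habs : |t| ≠ 0 := abs_ne_zero.mpr ht
    have hsign : t * (SignType.sign t : ℝ) = |t| := by
      rcases ht.lt_or_gt with h | h <;> simp [h, abs_of_neg, abs_of_pos]
    refine ((hasDerivAt_id t).mul ((Real.hasDerivAt_rpow_const (p := s) (Or.inl habs)).comp t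
      (hasDerivAt_abs ht))).congr_deriv ?_
    have hpow : |t| ^ (s - 1) * |t| = |t| ^ s := by
      rw [← Real.rpow_add_one habs, sub_add_cancel]
    simp only [Function.comp_apply, id]
    linear_combination (s * |t| ^ (s - 1)) * hsign + s * hpow
  rcases eq_or_ne t 0 with rfl | ht
  · refine hasDerivAt_of_hasDerivAt_of_ne (fun y hy => hne hy) ?_ ?_
    · exact continuousAt_id.mul (continuous_abs.continuousAt.rpow_const (Or.inr hs))
    · exact continuousAt_const.mul (continuous_abs.continuousAt.rpow_const (Or.inr hs))
  · exact hne ht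

lemma contDiff_signedRpow (hs : 0 ≤ s) : ContDiff ℝ 1 (signedRpow s) := by
  rw [contDiff_one_iff_deriv]
  refine ⟨fun t => (hasDerivAt_signedRpow hs t).differentiableAt, ?_⟩
  rw [funext fun t => (hasDerivAt_signedRpow hs t).deriv]
  exact continuous_const.mul (continuous_abs.rpow_const fun _ => Or.inr hs)

lemma signedRpow_mul {c : ℝ} (hc : 0 < c) (t : ℝ) :
    signedRpow s (c * t) = c ^ (1 + s) * signedRpow s t := by
  rw [signedRpow, signedRpow, abs_mul, abs_of_pos hc, Real.mul_rpow hc.le (abs_nonneg t),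
    Real.rpow_add hc, Real.rpow_one]
  ring

lemma abs_signedRpow_le (hs : 0 ≤ s) (hs1 : s ≤ 1) (t : ℝ) :
    |signedRpow s t| ≤ |t| * (1 + |t|) := by
  rw [signedRpow, abs_mul, abs_of_nonneg (Real.rpow_nonneg (abs_nonneg t) s)]
  refine mul_le_mul_of_nonneg_left ?_ (abs_nonneg t)
  rcases le_or_gt |t| 1 with h | h
  · linarith [Real.rpow_le_one (abs_nonneg t) h hs, abs_nonneg t]
  · linarith [Real.rpow_le_self_of_one_le h.le hs1]

lemma tendsto_signedRpow (t : ℝ) : Tendsto (fun s => signedRpow s t) (𝓝 0) (𝓝 t) := by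
  rcases eq_or_ne t 0 with rfl | ht
  · simp [signedRpow]
  · simpa [signedRpow] using
      ((Real.continuousAt_const_rpow (b := 0) (abs_ne_zero.mpr ht)).tendsto.const_mul t)

end SignedRpow

def totalPressure (V : E3 → E3) (P : E3 → ℝ) (x : E3) : ℝ := (1 / 2) * ‖V x‖ ^ 2 + P x

namespace IsHomogEuler

variable {α : ℝ} {V : E3 → E3} {P : E3 → ℝ} {x : E3}

lemma differentiableAt_vel (h : IsHomogEuler α V P) (hx : x ≠ 0) : DifferentiableAt ℝ V x :=
  (h.contV.differentiableOn one_ne_zero).differentiableAt (isOpen_compl_singleton.mem_nhds hx)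

lemma differentiableAt_pres (h : IsHomogEuler α V P) (hx : x ≠ 0) : DifferentiableAt ℝ P x :=
  (h.contP.differentiableOn one_ne_zero).differentiableAt (isOpen_compl_singleton.mem_nhds hx)

lemma contDiffOn_totalPressure (h : IsHomogEuler α V P) :
    ContDiffOn ℝ 1 (totalPressure V P) {0}ᶜ :=
  (contDiffOn_const.mul (h.contV.norm_sq ℝ)).add h.contP

lemma hasFDerivAt_totalPressure (h : IsHomogEuler α V P) (hx : x ≠ 0) :
    HasFDerivAt (totalPressure V P)
      ((1 / 2 : ℝ) • (2 • (innerSL ℝ (V x)).comp (fderiv ℝ V x)) + fderiv ℝ P x) x :=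
  ((h.differentiableAt_vel hx).hasFDerivAt.norm_sq.const_mul _).add
    (h.differentiableAt_pres hx).hasFDerivAt

lemma fderiv_totalPressure_apply_vel (h : IsHomogEuler α V P) (hx : x ≠ 0) :
    fderiv ℝ (totalPressure V P) x (V x) = 0 := by
  rw [(h.hasFDerivAt_totalPressure hx).fderiv]
  simp only [add_apply, smul_apply, ContinuousLinearMap.comp_apply, innerSL_apply_apply]
  rw [← inner_gradient_left (𝕜 := ℝ), nsmul_eq_mul, Nat.cast_ofNat, smul_eq_mul,
    ← mul_assoc, one_div_mul_cancel two_ne_zero, one_mul, real_inner_comm (V x),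
    ← inner_add_right, h.euler x hx, inner_zero_right]

lemma totalPressure_smul (h : IsHomogEuler α V P) {r : ℝ} (hr : 0 < r) (hx : x ≠ 0) :
    totalPressure V P (r • x) = r ^ (-(2 * α)) * totalPressure V P x := by
  have hsq : (r ^ (-α)) ^ 2 = r ^ (-(2 * α)) := by
    rw [← Real.rpow_natCast, ← Real.rpow_mul hr.le, Nat.cast_ofNat, neg_mul, mul_comm]
  rw [totalPressure, totalPressure, h.homV r hr x hx, h.homP r hr x hx, norm_smul,
    Real.norm_of_nonneg (Real.rpow_nonneg hr.le _), mul_pow, hsq]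
  ring

lemma div3_signedRpow_totalPressure_smul_vel (h : IsHomogEuler α V P) {s : ℝ} (hs : 0 ≤ s)
    (hx : x ≠ 0) : div3 (fun y => signedRpow s (totalPressure V P y) • V y) x = 0 := by
  have hH : DifferentiableAt ℝ (totalPressure V P) x :=
    (h.hasFDerivAt_totalPressure hx).differentiableAt
  have hψ : DifferentiableAt ℝ (signedRpow s) (totalPressure V P x) :=
    (contDiff_signedRpow hs).differentiable one_ne_zero _
  have hψH : HasFDerivAt (fun y => signedRpow s (totalPressure V P y)) _ x :=
    hψ.hasFDerivAt.comp x hH.hasFDerivAt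
  rw [div3_smul hψH.differentiableAt (h.differentiableAt_vel hx), h.divFree x hx, hψH.fderiv]
  simp [h.fderiv_totalPressure_apply_vel hx]

end IsHomogEuler

section Polar

variable {E : Type*} [NormedAddCommGroup E] [NormedSpace ℝ E] [Nontrivial E]
  [FiniteDimensional ℝ E] [MeasurableSpace E] [BorelSpace E]

theorem integral_eq_integral_sphere_mul_integral_Ioi (μ : Measure E) [μ.IsAddHaarMeasure]
    {f : E → ℝ} (K : sphere (0 : E) 1 → ℝ) (g : ℝ → ℝ)
    (hf : ∀ σ : sphere (0 : E) 1, ∀ r : ℝ, 0 < r → f (r • (σ : E)) = K σ * g r) :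
    ∫ x, f x ∂μ = (∫ σ, K σ ∂μ.toSphere) *
      ∫ r in Ioi (0 : ℝ), r ^ (Module.finrank ℝ E - 1) * g r := by
  calc ∫ x, f x ∂μ = ∫ x : ({(0 : E)}ᶜ : Set E), f x ∂(μ.comap (↑)) := by
        rw [integral_subtype_comap (measurableSet_singleton _).compl, restrict_compl_singleton]
    _ = ∫ p : sphere (0 : E) 1 × Ioi (0 : ℝ), K p.1 * g p.2
          ∂μ.toSphere.prod (.volumeIoiPow (Module.finrank ℝ E - 1)) := by
        rw [← (μ.measurePreserving_homeomorphUnitSphereProd).integral_comp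
          (Homeomorph.measurableEmbedding _)]
        refine integral_congr_ae (ae_of_all _ fun x => ?_)
        dsimp only
        rw [← hf _ _ ((homeomorphUnitSphereProd E) x).2.2]
        simp [homeomorphUnitSphereProd, smul_inv_smul₀ (norm_ne_zero_iff.2 x.2)]
    _ = (∫ σ, K σ ∂μ.toSphere) *
          ∫ r : Ioi (0 : ℝ), g r ∂(.volumeIoiPow (Module.finrank ℝ E - 1)) :=
        integral_prod_mul (f := K) (g := fun r : Ioi (0 : ℝ) => g r)
    _ = _ := by
        simp only [Measure.volumeIoiPow, ENNReal.ofReal]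
        rw [integral_withDensity_eq_integral_smul
            (measurable_subtype_coe.pow_const _).real_toNNReal,
          integral_subtype_comap measurableSet_Ioi
            fun r => Real.toNNReal (r ^ (Module.finrank ℝ E - 1)) • g r,
          setIntegral_congr_fun measurableSet_Ioi fun r hr => ?_]
        rw [NNReal.smul_def, Real.coe_toNNReal _ (pow_nonneg hr.out.le _), smul_eq_mul]

end Polar

section RadialCutoff

def radialCutoff : ContDiffBump (5 / 2 : ℝ) := ⟨1 / 2, 3 / 2, by norm_num, by norm_num⟩

lemma radialCutoff_eq_zero {t : ℝ} (ht : t ∉ Ioo 1 4) : radialCutoff t = 0 := by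
  refine radialCutoff.zero_of_le_dist ?_
  simp only [mem_Ioo, not_and_or, not_lt] at ht
  rw [Real.dist_eq, le_abs]
  change 3 / 2 ≤ t - 5 / 2 ∨ 3 / 2 ≤ -(t - 5 / 2)
  rcases ht with ht | ht
  · right; linarith
  · left; linarith

lemma deriv_radialCutoff_eq_zero {t : ℝ} (ht : t ∉ Icc 1 4) : deriv radialCutoff t = 0 := by
  have hzero : (radialCutoff : ℝ → ℝ) =ᶠ[𝓝 t] fun _ => 0 := by
    filter_upwards [isClosed_Icc.isOpen_compl.mem_nhds ht] with u hu
    exact radialCutoff_eq_zero fun hu' => hu (Ioo_subset_Icc_self hu')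
  rw [hzero.deriv_eq, deriv_const]

lemma radialCutoff_pos {t : ℝ} (ht : t ∈ Ioo 1 4) : 0 < radialCutoff t := by
  refine radialCutoff.pos_of_mem_ball ?_
  rw [Real.ball_eq_Ioo]
  convert ht using 2 <;> norm_num [radialCutoff]

variable {E F : Type*} [NormedAddCommGroup E] [InnerProductSpace ℝ E] [NormedAddCommGroup F]
  [NormedSpace ℝ F]

lemma contDiff_radialCutoff_norm_sq_smul {W : E → F} (hW : ContDiffOn ℝ 1 W {0}ᶜ) :
    ContDiff ℝ 1 fun x => radialCutoff (‖x‖ ^ 2) • W x := by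
  rw [contDiff_iff_contDiffAt]
  intro x
  rcases eq_or_ne x 0 with rfl | hx
  · refine contDiffAt_const (c := (0 : F)).congr_of_eventuallyEq ?_
    filter_upwards [ball_mem_nhds (0 : E) one_pos] with y hy
    rw [radialCutoff_eq_zero, zero_smul]
    rw [mem_ball_zero_iff] at hy
    exact fun h => by nlinarith [h.1, norm_nonneg y]
  · exact (radialCutoff.contDiff.comp (contDiff_norm_sq ℝ)).contDiffAt.smul
      (hW.contDiffAt (isOpen_compl_singleton.mem_nhds hx))

lemma hasCompactSupport_radialCutoff_norm_sq_smul [FiniteDimensional ℝ E] (W : E → F) :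
    HasCompactSupport fun x => radialCutoff (‖x‖ ^ 2) • W x := by
  refine HasCompactSupport.intro (isCompact_closedBall (0 : E) 2) fun x hx => ?_
  rw [mem_closedBall_zero_iff, not_le] at hx
  rw [radialCutoff_eq_zero, zero_smul]
  exact fun h => by nlinarith [h.2]

end RadialCutoff

lemma div3_radialCutoff_norm_sq_smul {W : E3 → E3} {x : E3} (hW : DifferentiableAt ℝ W x) :
    div3 (fun y => radialCutoff (‖y‖ ^ 2) • W y) x =
      radialCutoff (‖x‖ ^ 2) * div3 W x + 2 * deriv radialCutoff (‖x‖ ^ 2) * inner ℝ (W x) x := by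
  have hχ : HasFDerivAt (fun y : E3 => radialCutoff (‖y‖ ^ 2))
      (deriv radialCutoff (‖x‖ ^ 2) • (2 • innerSL ℝ x)) x :=
    ((radialCutoff.contDiff.differentiable one_ne_zero _).hasDerivAt).comp_hasFDerivAt x
      (hasStrictFDerivAt_norm_sq x).hasFDerivAt
  rw [div3_smul hχ.differentiableAt hW, hχ.fderiv]
  simp [real_inner_comm]
  ring

lemma hasDerivAt_radialCutoff_sq_mul_rpow {k r : ℝ} (hr : 0 < r) :
    HasDerivAt (fun r => radialCutoff (r ^ 2) * r ^ (k + 2))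
      (r ^ 2 * (2 * deriv radialCutoff (r ^ 2) * r ^ (k + 1)) +
        (k + 2) * (radialCutoff (r ^ 2) * r ^ (k + 1))) r := by
  have hχ : HasDerivAt radialCutoff (deriv radialCutoff (r ^ 2)) (r ^ 2) :=
    (radialCutoff.contDiff.differentiable one_ne_zero _).hasDerivAt
  have hχsq : HasDerivAt (fun r : ℝ => radialCutoff (r ^ 2))
      (deriv radialCutoff (r ^ 2) * (2 * r)) r :=
    (HasDerivAt.comp (h := fun x : ℝ => x ^ 2) r hχ (hasDerivAt_pow 2 r)).congr_deriv (by simp)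
  refine (hχsq.mul (Real.hasDerivAt_rpow_const (p := k + 2) (Or.inl hr.ne'))).congr_deriv ?_
  rw [show k + 2 - 1 = k + 1 by ring, show k + 2 = k + 1 + 1 by ring, Real.rpow_add_one hr.ne']
  ring

lemma setIntegral_Ioi_sq_mul_deriv_radialCutoff (k : ℝ) :
    ∫ r in Ioi (0 : ℝ), r ^ 2 * (2 * deriv radialCutoff (r ^ 2) * r ^ (k + 1)) =
      ∫ r in (1 : ℝ)..2, r ^ 2 * (2 * deriv radialCutoff (r ^ 2) * r ^ (k + 1)) := by
  rw [intervalIntegral.integral_of_le one_le_two, ← integral_Icc_eq_integral_Ioc]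
  refine setIntegral_eq_of_subset_of_forall_sdiff_eq_zero measurableSet_Ioi
    (fun r hr => one_pos.trans_le hr.1) fun r ⟨hr0, hr⟩ => ?_
  have hr0 : 0 < r := hr0
  rw [deriv_radialCutoff_eq_zero fun h => hr ⟨by nlinarith [h.1], by nlinarith [h.2]⟩]
  ring

lemma continuousOn_rpow_const_Icc_one_two (c : ℝ) :
    ContinuousOn (fun r : ℝ => r ^ c) (uIcc 1 2) :=
  continuousOn_id.rpow_const fun r hr => Or.inl (by
    rw [uIcc_of_le one_le_two] at hr
    exact (one_pos.trans_le hr.1).ne')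

lemma intervalIntegral_sq_mul_deriv_radialCutoff (k : ℝ) :
    ∫ r in (1 : ℝ)..2, r ^ 2 * (2 * deriv radialCutoff (r ^ 2) * r ^ (k + 1)) =
      -((k + 2) * ∫ r in (1 : ℝ)..2, radialCutoff (r ^ 2) * r ^ (k + 1)) := by
  have hχ : Continuous fun r : ℝ => radialCutoff (r ^ 2) :=
    radialCutoff.continuous.comp (continuous_pow 2)
  have hχ' : Continuous fun r : ℝ => deriv radialCutoff (r ^ 2) :=
    (radialCutoff.contDiff.continuous_deriv le_rfl).comp (continuous_pow 2)
  have hint : IntervalIntegrable (fun r : ℝ => radialCutoff (r ^ 2) * r ^ (k + 1)) volume 1 2 :=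
    (hχ.continuousOn.mul (continuousOn_rpow_const_Icc_one_two _)).intervalIntegrable
  have hint' : IntervalIntegrable
      (fun r : ℝ => r ^ 2 * (2 * deriv radialCutoff (r ^ 2) * r ^ (k + 1))) volume 1 2 :=
    ((continuous_pow 2).continuousOn.mul ((continuous_const.mul hχ').continuousOn.mul
      (continuousOn_rpow_const_Icc_one_two _))).intervalIntegrable
  have hftc := intervalIntegral.integral_eq_sub_of_hasDerivAt
    (fun r hr => hasDerivAt_radialCutoff_sq_mul_rpow (k := k)
      (by rw [uIcc_of_le one_le_two] at hr; linarith [hr.1]))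
    (hint'.add (hint.const_mul (k + 2)))
  rw [intervalIntegral.integral_add hint' (hint.const_mul _), intervalIntegral.integral_const_mul,
    radialCutoff_eq_zero (by norm_num), radialCutoff_eq_zero (by norm_num), zero_mul, zero_mul,
    sub_zero] at hftc
  exact eq_neg_of_add_eq_zero_left hftc

lemma intervalIntegral_radialCutoff_sq_mul_rpow_pos (k : ℝ) :
    0 < ∫ r in (1 : ℝ)..2, radialCutoff (r ^ 2) * r ^ (k + 1) :=
  intervalIntegral.intervalIntegral_pos_of_pos_on
    (((radialCutoff.continuous.comp (continuous_pow 2)).continuousOn.mul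
      (continuousOn_rpow_const_Icc_one_two _)).intervalIntegrable)
    (fun r hr => mul_pos (radialCutoff_pos ⟨by nlinarith [hr.1], by nlinarith [hr.1, hr.2]⟩)
      (Real.rpow_pos_of_pos (one_pos.trans hr.1) _)) one_lt_two

lemma integral_Ioi_sq_mul_deriv_radialCutoff_ne_zero {k : ℝ} (hk : k ≠ -2) :
    ∫ r in Ioi (0 : ℝ), r ^ 2 * (2 * deriv radialCutoff (r ^ 2) * r ^ (k + 1)) ≠ 0 := by
  rw [setIntegral_Ioi_sq_mul_deriv_radialCutoff, intervalIntegral_sq_mul_deriv_radialCutoff,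
    neg_ne_zero]
  exact mul_ne_zero (fun h => hk (by linarith))
    (intervalIntegral_radialCutoff_sq_mul_rpow_pos k).ne'

theorem integral_inner_sphere_eq_zero_of_div3_eq_zero {W : E3 → E3} {k : ℝ} (hk : k ≠ -2)
    (hW : ContDiffOn ℝ 1 W {0}ᶜ) (hdiv : ∀ x : E3, x ≠ 0 → div3 W x = 0)
    (hhom : ∀ r : ℝ, 0 < r → ∀ x : E3, x ≠ 0 → W (r • x) = r ^ k • W x) :
    ∫ σ : sphere (0 : E3) 1, inner ℝ (W σ) (σ : E3) ∂(volume : Measure E3).toSphere = 0 := by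
  have hdivG : ∀ᵐ x : E3, div3 (fun y => radialCutoff (‖y‖ ^ 2) • W y) x =
      2 * deriv radialCutoff (‖x‖ ^ 2) * inner ℝ (W x) x := by
    filter_upwards [compl_mem_ae_iff.2 (measure_singleton (0 : E3))] with x hx
    rw [div3_radialCutoff_norm_sq_smul
      ((hW.differentiableOn one_ne_zero).differentiableAt (isOpen_compl_singleton.mem_nhds hx)),
      hdiv x hx, mul_zero, zero_add]
  have hpolar := integral_eq_integral_sphere_mul_integral_Ioi volume
    (f := fun x : E3 => 2 * deriv radialCutoff (‖x‖ ^ 2) * inner ℝ (W x) x)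
    (fun σ => inner ℝ (W σ) (σ : E3)) (fun r => 2 * deriv radialCutoff (r ^ 2) * r ^ (k + 1))
    fun σ r hr => by
      rw [hhom r hr σ (ne_zero_of_mem_unit_sphere σ), norm_smul, norm_eq_of_mem_sphere σ,
        Real.norm_of_nonneg hr.le, mul_one, real_inner_smul_left, real_inner_smul_right,
        Real.rpow_add_one hr.ne']
      ring
  rw [← integral_congr_ae hdivG, integral_div3_eq_zero (contDiff_radialCutoff_norm_sq_smul hW)
    (hasCompactSupport_radialCutoff_norm_sq_smul W), finrank_euclideanSpace_fin] at hpolar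
  exact (mul_eq_zero.1 hpolar.symm).resolve_right
    (integral_Ioi_sq_mul_deriv_radialCutoff_ne_zero hk)

lemma IsHomogEuler.integral_signedRpow_totalPressure_mul_inner_eq_zero {α : ℝ} {V : E3 → E3}
    {P : E3 → ℝ} (h : IsHomogEuler α V P) {s : ℝ} (hs : 0 ≤ s) (hα : 2 * α * (1 + s) + α ≠ 2) :
    ∫ σ : sphere (0 : E3) 1, signedRpow s (totalPressure V P σ) * inner ℝ (V σ) (σ : E3)
      ∂(volume : Measure E3).toSphere = 0 := by
  have hflux := integral_inner_sphere_eq_zero_of_div3_eq_zero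
    (W := fun y => signedRpow s (totalPressure V P y) • V y) (k := -(2 * α) * (1 + s) - α)
    (fun hk => hα (by linarith))
    (((contDiff_signedRpow hs).comp_contDiffOn h.contDiffOn_totalPressure).smul h.contV)
    (fun x hx => h.div3_signedRpow_totalPressure_smul_vel hs hx) fun r hr x hx => by
      rw [h.totalPressure_smul hr hx, signedRpow_mul (Real.rpow_pos_of_pos hr _), h.homV r hr x hx,
        smul_smul, smul_smul, ← Real.rpow_mul hr.le, sub_eq_add_neg, Real.rpow_add hr]
      ring_nf
  simpa only [real_inner_smul_left] using hflux

lemma tendsto_integral_signedRpow_mul {X : Type*} [TopologicalSpace X] [CompactSpace X]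
    [MeasurableSpace X] [OpensMeasurableSpace X] (μ : Measure X) [IsFiniteMeasure μ]
    {f g : X → ℝ} (hf : Continuous f) (hg : Continuous g) :
    Tendsto (fun s => ∫ x, signedRpow s (f x) * g x ∂μ) (𝓝[>] 0) (𝓝 (∫ x, f x * g x ∂μ)) := by
  refine tendsto_integral_filter_of_dominated_convergence (fun x => |f x| * (1 + |f x|) * |g x|)
    ?_ ?_ ?_ ?_
  · filter_upwards [self_mem_nhdsWithin] with s hs
    exact (((contDiff_signedRpow hs.out.le).continuous.comp hf).mul hg).aestronglyMeasurable
  · filter_upwards [Ioc_mem_nhdsGT one_pos] with s hs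
    refine ae_of_all _ fun x => ?_
    rw [norm_mul, Real.norm_eq_abs, Real.norm_eq_abs]
    exact mul_le_mul_of_nonneg_right (abs_signedRpow_le hs.1.le hs.2 _) (abs_nonneg _)
  · exact ((hf.abs.mul (continuous_const.add hf.abs)).mul hg.abs).integrable_of_hasCompactSupport
      (HasCompactSupport.of_compactSpace _)
  · exact ae_of_all _ fun x => ((tendsto_signedRpow (f x)).mono_left nhdsWithin_le_nhds).mul_const _

/-- in the Onsager-critical case `α = 2/3` the energy flux
through the unit sphere vanishes. -/
theorem stmt18 (V : E3 → E3) (P : E3 → ℝ) (h : IsHomogEuler (2 / 3) V P) :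
    ∫ σ : sphere (0 : E3) 1,
      ((1 / 2) * ‖V (σ : E3)‖ ^ 2 + P σ) * (inner ℝ (V σ) (σ : E3) : ℝ)
      ∂((volume : Measure E3).toSphere) = 0 := by
  have hσ (σ : sphere (0 : E3) 1) : (σ : E3) ∈ ({0}ᶜ : Set E3) := ne_zero_of_mem_unit_sphere σ
  have hV : Continuous fun σ : sphere (0 : E3) 1 => V σ :=
    h.contV.continuousOn.comp_continuous continuous_subtype_val hσ
  have hH : Continuous fun σ : sphere (0 : E3) 1 => totalPressure V P σ :=
    h.contDiffOn_totalPressure.continuousOn.comp_continuous continuous_subtype_val hσ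
  refine tendsto_nhds_unique (tendsto_integral_signedRpow_mul _ hH
    (hV.inner continuous_subtype_val)) (tendsto_const_nhds.congr' ?_)
  filter_upwards [self_mem_nhdsWithin] with s (hs : 0 < s)
  exact (h.integral_signedRpow_totalPressure_mul_inner_eq_zero hs.le
    (fun hs' => by linarith)).symm
end
end
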